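/- arXiv:1504.00910 — 11 statements merged into one kernel-verified Lean document; each statement's English description precedes it below -/
import Mathlib

section
/- Let G = (V,E) be a finite connected graph with symmetric irreflexive edge relation, let T ⊆ V be nonempty, and let φ and φ* be flows on G satisfying flow conservation for the injections q : V → ℝ and q* : V → ℝ respectively. If q_i ≥ q*_i for all i ∈ V \ T, and u ∈ V \ T satisfies the strict inequality q_u > q*_u, then there exists a directed path {i_1, …, i_n} of pairwise distinct vertices with i_1 ∈ T, i_n = u, and the strict inequality φ*_{i_l i_{l+1}} > φ_{i_l i_{l+1}} for every 1 ≤ l ≤ n−1. -/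
/-!
The difference `ψ = φ* - φ` is a skew flow whose net inflow at `i` is `q i - q* i`. Let `S` be
the set of vertices from which `u` can be reached along edges with `ψ > 0`. No edge from outside
`S` into `S` carries positive `ψ`, and the flow inside `S` cancels by skew-symmetry, so the net
inflow into `S` is `≤ 0`. If `S` missed `T`, the net inflow would be `≥ q u - q* u > 0`.
Hence some `t ∈ T` reaches `u`, and cutting out cycles turns the walk into a path.
-/

open Finset

namespace List

theorem exists_nodup_isChain_of_reflTransGen {α : Type*} {r : α → α → Prop} {a b : α}
    (h : Relation.ReflTransGen r a b) :
    ∃ l : List α, (a :: l).Nodup ∧ (a :: l).IsChain r ∧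
      (a :: l).getLast (cons_ne_nil a l) = b := by
  classical
  induction h using Relation.ReflTransGen.head_induction_on with
  | refl => exact ⟨[], nodup_singleton b, isChain_singleton b, rfl⟩
  | @head a c hac _ ih =>
    obtain ⟨l, hnd, hch, hlast⟩ := ih
    by_cases ha : a ∈ c :: l
    · obtain ⟨l₁, l₂, hsplit⟩ := append_of_mem ha
      rw [hsplit] at hnd hch
      refine ⟨l₂, hnd.sublist (sublist_append_right _ _), hch.suffix (suffix_append _ _), ?_⟩
      rwa [getLast_congr _ (by simp) hsplit, getLast_append_of_ne_nil] at hlast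
    · exact ⟨c :: l, nodup_cons.mpr ⟨ha, hnd⟩, isChain_cons_cons.mpr ⟨hac, hch⟩,
        by rwa [getLast_cons_cons]⟩

end List

theorem exists_injective_path_of_reflTransGen {α : Type*} {r : α → α → Prop} {a b : α}
    (h : Relation.ReflTransGen r a b) :
    ∃ (n : ℕ) (p : Fin (n + 1) → α), Function.Injective p ∧ p 0 = a ∧
      p (Fin.last n) = b ∧ ∀ l : Fin n, r (p l.castSucc) (p l.succ) := by
  obtain ⟨l, hnd, hch, hlast⟩ := List.exists_nodup_isChain_of_reflTransGen h
  refine ⟨l.length, (a :: l).get, List.nodup_iff_injective_get.mp hnd, rfl, ?_, fun i => ?_⟩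
  · rw [← hlast, List.getLast_eq_getElem]; rfl
  · exact List.isChain_iff_getElem.mp hch i (by simp)

section NetFlow

variable {V M : Type*} [AddCommGroup M] [LinearOrder M] [IsOrderedAddMonoid M]
  {g : V → V → M}

theorem Finset.sum_sum_eq_zero_of_antisymm (hg : ∀ i j, g i j = -g j i) (S : Finset V) :
    ∑ i ∈ S, ∑ j ∈ S, g j i = 0 := by
  refine self_eq_neg.mp ?_
  calc ∑ i ∈ S, ∑ j ∈ S, g j i = ∑ i ∈ S, ∑ j ∈ S, g i j := Finset.sum_comm
    _ = -∑ i ∈ S, ∑ j ∈ S, g j i := by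
      simp only [← Finset.sum_neg_distrib]
      exact Finset.sum_congr rfl fun i _ => Finset.sum_congr rfl fun j _ => hg i j

theorem sum_inflow_nonpos_of_forall_not_mem [Fintype V] (hg : ∀ i j, g i j = -g j i)
    (S : Finset V) (hS : ∀ i ∈ S, ∀ j ∉ S, g j i ≤ 0) :
    ∑ i ∈ S, ∑ j, g j i ≤ 0 := by
  classical
  calc ∑ i ∈ S, ∑ j, g j i
        = ∑ i ∈ S, ∑ j ∈ S, g j i + ∑ i ∈ S, ∑ j ∈ Sᶜ, g j i := by
        simp only [← Finset.sum_add_distrib, Finset.sum_add_sum_compl]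
    _ ≤ 0 := by
      rw [Finset.sum_sum_eq_zero_of_antisymm hg, zero_add]
      exact Finset.sum_nonpos fun i hi => Finset.sum_nonpos fun j hj =>
        hS i hi j (Finset.mem_compl.mp hj)

theorem exists_mem_reflTransGen_of_inflow_pos [Fintype V] (hg : ∀ i j, g i j = -g j i)
    {T : Finset V} (hT : ∀ i ∉ T, 0 ≤ ∑ j, g j i) {u : V} (hpos : 0 < ∑ j, g j u) :
    ∃ t ∈ T, Relation.ReflTransGen (fun j i => 0 < g j i) t u := by
  classical
  by_contra! hnone
  set S := Finset.univ.filter fun v => Relation.ReflTransGen (fun j i => 0 < g j i) v u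
  have hST : ∀ i ∈ S, i ∉ T := fun i hi hiT => hnone i hiT (Finset.mem_filter.mp hi).2
  have hclosed : ∀ i ∈ S, ∀ j ∉ S, g j i ≤ 0 := by
    intro i hi j hj
    by_contra! hji
    exact hj (Finset.mem_filter.mpr ⟨mem_univ j, .head hji (Finset.mem_filter.mp hi).2⟩)
  have huS : u ∈ S := Finset.mem_filter.mpr ⟨mem_univ u, .refl⟩
  have : 0 < ∑ i ∈ S, ∑ j, g j i :=
    Finset.sum_pos' (fun i hi => hT i (hST i hi)) ⟨u, huS, hpos⟩
  exact this.not_ge (sum_inflow_nonpos_of_forall_not_mem hg S hclosed)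

end NetFlow

theorem aquarius_theorem_strict_general
    {V : Type*} [Fintype V]
    (E : V → V → Prop) [DecidableRel E]
    (hsymm : ∀ i j, E i j → E j i)
    (T : Finset V)
    (φ φs : V → V → ℝ)
    (hskew : ∀ i j, E i j → φ i j = - φ j i)
    (hskews : ∀ i j, E i j → φs i j = - φs j i)
    (q qs : V → ℝ)
    (hcons : ∀ i : V, (∑ j ∈ univ.filter (fun j => E j i), φ j i) + q i = 0)
    (hconss : ∀ i : V, (∑ j ∈ univ.filter (fun j => E j i), φs j i) + qs i = 0)
    (hq : ∀ i : V, i ∉ T → q i ≥ qs i) :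
    ∀ u : V, u ∉ T → q u > qs u →
      ∃ (n : ℕ) (p : Fin (n + 1) → V),
        Function.Injective p ∧
        p 0 ∈ T ∧
        p (Fin.last n) = u ∧
        (∀ l : Fin n, E (p l.castSucc) (p l.succ)) ∧
        (∀ l : Fin n, φs (p l.castSucc) (p l.succ) > φ (p l.castSucc) (p l.succ)) := by
  intro u _ hqu
  set g : V → V → ℝ := fun j i => if E j i then φs j i - φ j i else 0
  have hg : ∀ i j, g i j = -g j i := by
    intro i j
    by_cases hij : E i j
    · simp only [g, if_pos hij, if_pos (hsymm i j hij), hskew i j hij, hskews i j hij]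
      ring
    · simp only [g, if_neg hij, if_neg (mt (hsymm j i) hij), neg_zero]
  have hinflow : ∀ i, ∑ j, g j i = q i - qs i := by
    intro i
    rw [← Finset.sum_filter, Finset.sum_sub_distrib]
    linarith [hcons i, hconss i]
  obtain ⟨t, htT, hreach⟩ := exists_mem_reflTransGen_of_inflow_pos hg
    (fun i hi => (hinflow i).symm ▸ sub_nonneg.mpr (hq i hi))
    ((hinflow u).symm ▸ sub_pos.mpr hqu)
  have hedge : ∀ j i, 0 < g j i → E j i ∧ φs j i > φ j i := by
    intro j i hpos
    by_cases hji : E j i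
    · simp only [g, if_pos hji, sub_pos] at hpos
      exact ⟨hji, hpos⟩
    · simp only [g, if_neg hji, lt_irrefl] at hpos
  obtain ⟨n, p, hinj, hp0, hplast, hstep⟩ := exists_injective_path_of_reflTransGen
    (Relation.ReflTransGen.mono hedge t u hreach)
  exact ⟨n, p, hinj, hp0 ▸ htT, hplast, fun l => (hstep l).1, fun l => (hstep l).2⟩

/-- **Aquarius Theorem** (strict inequalities): in a finite connected graph with a
symmetric irreflexive edge relation, if two conserved flows `φ`, `φs` have
injections `q ≥ qs` outside a nonempty set `T`, and `u ∉ T` satisfies the strict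
inequality `q u > qs u`, then there is a directed path of pairwise distinct
vertices from some node of `T` to `u` along which `φs > φ` edgewise strictly. -/
theorem aquarius_theorem_strict
    {V : Type*} [Fintype V] [DecidableEq V] [Nonempty V]
    (E : V → V → Prop) [DecidableRel E]
    (hsymm : ∀ i j, E i j → E j i)
    (hirrefl : ∀ i, ¬ E i i)
    (hconn : ∀ u v : V, Relation.ReflTransGen E u v)
    (T : Finset V) (hT : T.Nonempty)
    (φ φs : V → V → ℝ)
    (hskew : ∀ i j, E i j → φ i j = - φ j i)
    (hskews : ∀ i j, E i j → φs i j = - φs j i)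
    (q qs : V → ℝ)
    (hcons : ∀ i : V, (∑ j ∈ univ.filter (fun j => E j i), φ j i) + q i = 0)
    (hconss : ∀ i : V, (∑ j ∈ univ.filter (fun j => E j i), φs j i) + qs i = 0)
    (hq : ∀ i : V, i ∉ T → q i ≥ qs i) :
    ∀ u : V, u ∉ T → q u > qs u →
      ∃ (n : ℕ) (p : Fin (n + 1) → V),
        Function.Injective p ∧
        p 0 ∈ T ∧
        p (Fin.last n) = u ∧
        (∀ l : Fin n, E (p l.castSucc) (p l.succ)) ∧
        (∀ l : Fin n, φs (p l.castSucc) (p l.succ) > φ (p l.castSucc) (p l.succ)) :=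
  aquarius_theorem_strict_general E hsymm T φ φs hskew hskews q qs hcons hconss hq
end

section
/- Let G = (V,E) be a finite graph with symmetric irreflexive edge relation and let φ and φ* be flows satisfying flow conservation for injections q and q* respectively. If A ⊆ V is a subset with ∑_{i ∈ A} q_i > ∑_{i ∈ A} q*_i, then there exists an edge (v,w) ∈ E with v ∉ A and w ∈ A such that φ*_{vw} > φ_{vw}. -/
open Finset

/-- **Existence of an increasing boundary edge**: if two conserved flows `φ`,
`φs` have injections with `∑_{i ∈ A} q i > ∑_{i ∈ A} qs i` over a vertex subset
`A`, then some edge `(v,w)` entering `A` (i.e. `v ∉ A`, `w ∈ A`) satisfies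
`φs v w > φ v w`. -/
theorem exists_increasing_boundary_edge
    {V : Type*} [Fintype V] [DecidableEq V] [Nonempty V]
    (E : V → V → Prop) [DecidableRel E]
    (hsymm : ∀ i j, E i j → E j i)
    (hirrefl : ∀ i, ¬ E i i)
    (φ φs : V → V → ℝ)
    (hskew : ∀ i j, E i j → φ i j = - φ j i)
    (hskews : ∀ i j, E i j → φs i j = - φs j i)
    (q qs : V → ℝ)
    (hcons : ∀ i : V, (∑ j ∈ univ.filter (fun j => E j i), φ j i) + q i = 0)
    (hconss : ∀ i : V, (∑ j ∈ univ.filter (fun j => E j i), φs j i) + qs i = 0)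
    (A : Finset V)
    (hA : (∑ i ∈ A, q i) > ∑ i ∈ A, qs i) :
    ∃ v w : V, E v w ∧ v ∉ A ∧ w ∈ A ∧ φs v w > φ v w := by
  by_contra hcon
  push_neg at hcon
  set ψ : V → V → ℝ := fun i j => φs i j - φ i j with hψ
  have hskewψ : ∀ i j, E i j → ψ i j = - ψ j i := by
    intro i j h
    simp only [hψ, hskew i j h, hskews i j h]; ring
  -- total incoming ψ over A is positive
  have key : ∑ i ∈ A, ∑ j ∈ univ.filter (fun j => E j i), ψ j i > 0 := by
    have h1 : ∑ i ∈ A, ((∑ j ∈ univ.filter (fun j => E j i), φ j i) + q i) = 0 := by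
      simp [hcons]
    have h2 : ∑ i ∈ A, ((∑ j ∈ univ.filter (fun j => E j i), φs j i) + qs i) = 0 := by
      simp [hconss]
    rw [Finset.sum_add_distrib] at h1 h2
    have heq : ∑ i ∈ A, ∑ j ∈ univ.filter (fun j => E j i), ψ j i
        = (∑ i ∈ A, ∑ j ∈ univ.filter (fun j => E j i), φs j i)
          - ∑ i ∈ A, ∑ j ∈ univ.filter (fun j => E j i), φ j i := by
      rw [← Finset.sum_sub_distrib]
      refine Finset.sum_congr rfl fun i _ => ?_
      rw [← Finset.sum_sub_distrib]
    rw [heq]; linarith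
  -- split each incoming sum at the boundary
  have split : ∑ i ∈ A, ∑ j ∈ univ.filter (fun j => E j i), ψ j i
      = (∑ i ∈ A, ∑ j ∈ (univ.filter (fun j => E j i)).filter (fun j => j ∈ A), ψ j i)
        + ∑ i ∈ A, ∑ j ∈ (univ.filter (fun j => E j i)).filter (fun j => j ∉ A), ψ j i := by
    rw [← Finset.sum_add_distrib]
    refine Finset.sum_congr rfl fun i _ => ?_
    exact (Finset.sum_filter_add_sum_filter_not _ _ _).symm
  -- internal edges cancel
  have internal :
      ∑ i ∈ A, ∑ j ∈ (univ.filter (fun j => E j i)).filter (fun j => j ∈ A), ψ j i = 0 := by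
    have prod0 : ∑ p ∈ (A ×ˢ A).filter (fun p : V × V => E p.1 p.2), ψ p.1 p.2 = 0 := by
      refine Finset.sum_involution (fun p _ => (p.2, p.1)) ?_ ?_ ?_ ?_
      · intro p hp
        simp only [Finset.mem_filter] at hp
        rw [hskewψ _ _ hp.2]; ring
      · intro p hp _
        simp only [Finset.mem_filter] at hp
        intro h
        have h21 : p.2 = p.1 := congrArg Prod.fst h
        exact hirrefl p.1 (h21 ▸ hp.2)
      · intro p hp
        simp only [Finset.mem_filter, Finset.mem_product] at hp ⊢
        exact ⟨⟨hp.1.2, hp.1.1⟩, hsymm _ _ hp.2⟩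
      · intro p hp; rfl
    have hfe : ∀ i : V, (univ.filter (fun j => E j i)).filter (fun j => j ∈ A)
        = A.filter (fun j => E j i) := by
      intro i; ext j; simp [and_comm]
    calc ∑ i ∈ A, ∑ j ∈ (univ.filter (fun j => E j i)).filter (fun j => j ∈ A), ψ j i
        = ∑ i ∈ A, ∑ j ∈ A, if E j i then ψ j i else 0 := by
          refine Finset.sum_congr rfl fun i _ => ?_
          rw [hfe i, Finset.sum_filter]
      _ = ∑ j ∈ A, ∑ i ∈ A, if E j i then ψ j i else 0 := Finset.sum_comm
      _ = ∑ p ∈ (A ×ˢ A).filter (fun p : V × V => E p.1 p.2), ψ p.1 p.2 := by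
          rw [Finset.sum_filter, Finset.sum_product]
      _ = 0 := prod0
  -- boundary terms are all nonpositive, contradiction
  have bdry : ∑ i ∈ A, ∑ j ∈ (univ.filter (fun j => E j i)).filter (fun j => j ∉ A), ψ j i ≤ 0 := by
    refine Finset.sum_nonpos fun i hi => Finset.sum_nonpos fun j hj => ?_
    simp only [Finset.mem_filter, Finset.mem_univ, true_and] at hj
    have := hcon j i hj.1 hj.2 hi
    simp only [hψ]; linarith
  rw [split, internal, zero_add] at key
  linarith
end

section
/- Let G = (V,E) be a finite connected graph with symmetric irreflexive edge relation equipped with a family of dissipation functions f. Let (φ, π) and (φ*, π*) be pairs of flows and potentials satisfying flow conservation for injections q and q* respectively, and both satisfying the potential drop equation with the same family f. Let T ⊆ V be nonempty. If π_t ≥ π*_t for all t ∈ T and q_i ≥ q*_i for all i ∈ V \ T, then π_u ≥ π*_u for every node u ∈ V \ T. -/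
open Finset

/-- **Monotonicity of potentials with consumptions** (weak version): for two
solutions `(φ, π)` and `(φs, πs)` of the flow conservation and potential drop
equations with the same family `f` of dissipation functions, if `π ≥ πs` on a
nonempty set `T` and `q ≥ qs` off `T`, then `π ≥ πs` everywhere off `T`. -/
theorem monotonicity_of_potentials_weak
    {V : Type*} [Fintype V] [DecidableEq V] [Nonempty V]
    (E : V → V → Prop) [DecidableRel E]
    (hsymm : ∀ i j, E i j → E j i)
    (hirrefl : ∀ i, ¬ E i i)
    (hconn : ∀ u v : V, Relation.ReflTransGen E u v)
    (f : V → V → ℝ → ℝ)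
    (hfcont : ∀ i j, E i j → Continuous (f i j))
    (hfmono : ∀ i j, E i j → StrictMono (f i j))
    (hfsymm : ∀ i j, E i j → ∀ x : ℝ, f i j x = - f j i (-x))
    (T : Finset V) (hT : T.Nonempty)
    (φ φs : V → V → ℝ)
    (hskew : ∀ i j, E i j → φ i j = - φ j i)
    (hskews : ∀ i j, E i j → φs i j = - φs j i)
    (q qs : V → ℝ)
    (hcons : ∀ i : V, (∑ j ∈ univ.filter (fun j => E j i), φ j i) + q i = 0)
    (hconss : ∀ i : V, (∑ j ∈ univ.filter (fun j => E j i), φs j i) + qs i = 0)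
    (π πs : V → ℝ)
    (hdrop : ∀ i j, E i j → π j - π i = - f i j (φ i j))
    (hdrops : ∀ i j, E i j → πs j - πs i = - f i j (φs i j))
    (hπT : ∀ t ∈ T, π t ≥ πs t)
    (hq : ∀ i : V, i ∉ T → q i ≥ qs i) :
    ∀ u : V, u ∉ T → π u ≥ πs u := by
  by_contra hcon
  push_neg at hcon
  obtain ⟨u, huT, hu⟩ := hcon
  obtain ⟨u₀, -, hmin⟩ := Finset.exists_min_image (univ : Finset V)
    (fun i => π i - πs i) ⟨u, mem_univ u⟩
  have hm : π u₀ - πs u₀ < 0 :=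
    lt_of_le_of_lt (hmin u (mem_univ u)) (by linarith)
  have step : ∀ i, π i - πs i = π u₀ - πs u₀ → ∀ j, E i j →
      π j - πs j = π u₀ - πs u₀ := by
    intro i hi j hij
    have hiT : i ∉ T := by
      intro hiT
      have := hπT i hiT
      linarith
    have hterm : ∀ k ∈ univ.filter (fun k => E k i), φ i k ≤ φs i k := by
      intro k hk
      have hEik : E i k := hsymm _ _ (mem_filter.1 hk).2
      have h1 := hdrop i k hEik
      have h2 := hdrops i k hEik
      have hgk : π u₀ - πs u₀ ≤ π k - πs k := hmin k (mem_univ k)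
      have hf : f i k (φ i k) ≤ f i k (φs i k) := by linarith
      exact le_of_not_gt (fun h => absurd ((hfmono i k hEik) h) (not_lt.2 hf))
    have hsum : ∑ k ∈ univ.filter (fun k => E k i), φ i k = q i := by
      have h0 := hcons i
      have heq : ∑ k ∈ univ.filter (fun k => E k i), φ i k
          = ∑ k ∈ univ.filter (fun k => E k i), -(φ k i) :=
        Finset.sum_congr rfl fun k hk =>
          hskew i k (hsymm _ _ (mem_filter.1 hk).2)
      rw [heq, Finset.sum_neg_distrib]
      linarith
    have hsums : ∑ k ∈ univ.filter (fun k => E k i), φs i k = qs i := by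
      have h0 := hconss i
      have heq : ∑ k ∈ univ.filter (fun k => E k i), φs i k
          = ∑ k ∈ univ.filter (fun k => E k i), -(φs k i) :=
        Finset.sum_congr rfl fun k hk =>
          hskews i k (hsymm _ _ (mem_filter.1 hk).2)
      rw [heq, Finset.sum_neg_distrib]
      linarith
    have hle : ∑ k ∈ univ.filter (fun k => E k i), φ i k
        ≤ ∑ k ∈ univ.filter (fun k => E k i), φs i k :=
      Finset.sum_le_sum hterm
    have hiq := hq i hiT
    have hsumeq : ∑ k ∈ univ.filter (fun k => E k i), φ i k
        = ∑ k ∈ univ.filter (fun k => E k i), φs i k := by linarith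
    have hall := (Finset.sum_eq_sum_iff_of_le hterm).1 hsumeq
    have hj : j ∈ univ.filter (fun k => E k i) := by
      simp [hsymm _ _ hij]
    have hφj : φ i j = φs i j := hall j hj
    have h1 := hdrop i j hij
    have h2 := hdrops i j hij
    rw [hφj] at h1
    linarith
  have hall : ∀ v, Relation.ReflTransGen E u₀ v →
      π v - πs v = π u₀ - πs u₀ := by
    intro v h
    induction h with
    | refl => rfl
    | tail h₁ h₂ ih => exact step _ ih _ h₂
  obtain ⟨t, ht⟩ := hT
  have h1 := hall t (hconn u₀ t)
  have h2 := hπT t ht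
  linarith
end

section
/- Let G = (V,E) be a finite connected graph with symmetric irreflexive edge relation equipped with a family of dissipation functions f. Let (φ, π) and (φ*, π*) be pairs of flows and potentials satisfying flow conservation for injections q and q* respectively, and both satisfying the potential drop equation with the same family f. Let T ⊆ V be nonempty, suppose π_t ≥ π*_t for all t ∈ T and q_i ≥ q*_i for all i ∈ V \ T. Then for every node u ∈ V \ T with the strict inequality q_u > q*_u one has the strict inequality π_u > π*_u. -/
open Finset

/-- **Monotonicity of potentials with consumptions** (strict version): for two
solutions `(φ, π)` and `(φs, πs)` of the flow conservation and potential drop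
equations with the same family `f` of dissipation functions, if `π ≥ πs` on a
nonempty set `T` and `q ≥ qs` off `T`, then at every node `u ∉ T` where the
injection inequality is strict, `q u > qs u`, the potential inequality is
strict as well: `π u > πs u`. -/
theorem monotonicity_of_potentials_strict
    {V : Type*} [Fintype V] [DecidableEq V] [Nonempty V]
    (E : V → V → Prop) [DecidableRel E]
    (hsymm : ∀ i j, E i j → E j i)
    (hirrefl : ∀ i, ¬ E i i)
    (hconn : ∀ u v : V, Relation.ReflTransGen E u v)
    (f : V → V → ℝ → ℝ)
    (hfcont : ∀ i j, E i j → Continuous (f i j))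
    (hfmono : ∀ i j, E i j → StrictMono (f i j))
    (hfsymm : ∀ i j, E i j → ∀ x : ℝ, f i j x = - f j i (-x))
    (T : Finset V) (hT : T.Nonempty)
    (φ φs : V → V → ℝ)
    (hskew : ∀ i j, E i j → φ i j = - φ j i)
    (hskews : ∀ i j, E i j → φs i j = - φs j i)
    (q qs : V → ℝ)
    (hcons : ∀ i : V, (∑ j ∈ univ.filter (fun j => E j i), φ j i) + q i = 0)
    (hconss : ∀ i : V, (∑ j ∈ univ.filter (fun j => E j i), φs j i) + qs i = 0)
    (π πs : V → ℝ)
    (hdrop : ∀ i j, E i j → π j - π i = - f i j (φ i j))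
    (hdrops : ∀ i j, E i j → πs j - πs i = - f i j (φs i j))
    (hπT : ∀ t ∈ T, π t ≥ πs t)
    (hq : ∀ i : V, i ∉ T → q i ≥ qs i) :
    ∀ u : V, u ∉ T → q u > qs u → π u > πs u := by
  
  intro u huT hqu
  by_contra hle
  push_neg at hle
  classical
  set S : Finset V := univ.filter (fun i => i ∉ T ∧ π i ≤ πs i) with hS
  have huS : u ∈ S := by simp [hS, huT, hle]
  -- boundary monotonicity of flows
  have key : ∀ i ∈ S, ∀ j, j ∉ S → E j i → φs j i ≤ φ j i := by
    intro i hi j hj hE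
    have hiS : i ∉ T ∧ π i ≤ πs i := by simpa [hS] using hi
    have hdj : πs j - π j ≤ πs i - π i := by
      by_cases hjT : j ∈ T
      · have := hπT j hjT; linarith [hiS.2]
      · have hj2 : ¬ (π j ≤ πs j) := by
          intro h; exact hj (by simp [hS, hjT, h])
        push_neg at hj2; linarith [hiS.2]
    have h1 := hdrop j i hE
    have h2 := hdrops j i hE
    have hf : f j i (φs j i) ≤ f j i (φ j i) := by linarith
    exact (hfmono j i hE).le_iff_le.mp hf
  -- rewrite conservation
  have hsum : ∀ i : V, ∑ j ∈ univ.filter (fun j => E j i), (φ j i - φs j i) = qs i - q i := by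
    intro i
    have h1 := hcons i
    have h2 := hconss i
    rw [Finset.sum_sub_distrib]
    linarith
  -- the total sum is negative
  have hneg : ∑ i ∈ S, (qs i - q i) < 0 := by
    have : ∑ i ∈ S, (qs i - q i) < ∑ i ∈ S, (0 : ℝ) := by
      apply Finset.sum_lt_sum
      · intro i hi
        have hiS : i ∉ T ∧ π i ≤ πs i := by simpa [hS] using hi
        have := hq i hiS.1
        linarith
      · exact ⟨u, huS, by linarith⟩
    simpa using this
  -- antisymmetric part vanishes
  set g : V → V → ℝ := fun i j => if E j i then φ j i - φs j i else 0 with hg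
  have hanti : ∀ i j : V, g j i = - g i j := by
    intro i j
    by_cases h : E i j
    · have h' := hsymm i j h
      simp only [hg, h, h', if_true]
      rw [hskew i j h, hskews i j h]; ring
    · have h' : ¬ E j i := fun hh => h (hsymm j i hh)
      simp [hg, h, h']
  have hA : ∑ i ∈ S, ∑ j ∈ S, g i j = 0 := by
    have h1 : ∑ i ∈ S, ∑ j ∈ S, g i j = ∑ i ∈ S, ∑ j ∈ S, -(g j i) := by
      apply Finset.sum_congr rfl; intro i _
      apply Finset.sum_congr rfl; intro j _
      rw [hanti j i]
    have h2 : ∑ i ∈ S, ∑ j ∈ S, g j i = ∑ i ∈ S, ∑ j ∈ S, g i j := Finset.sum_comm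
    have h3 : ∑ i ∈ S, ∑ j ∈ S, -(g j i) = - ∑ i ∈ S, ∑ j ∈ S, g j i := by
      simp [Finset.sum_neg_distrib]
    have := h1
    rw [h3, h2] at this
    linarith
  -- boundary part is nonnegative
  have hB : 0 ≤ ∑ i ∈ S, ∑ j ∈ Sᶜ, g i j := by
    apply Finset.sum_nonneg
    intro i hi
    apply Finset.sum_nonneg
    intro j hj
    rw [Finset.mem_compl] at hj
    by_cases h : E j i
    · have := key i hi j hj h
      simp only [hg, h, if_true]
      linarith
    · simp [hg, h]
  -- combine
  have hsplit : ∑ i ∈ S, (qs i - q i)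
      = (∑ i ∈ S, ∑ j ∈ S, g i j) + (∑ i ∈ S, ∑ j ∈ Sᶜ, g i j) := by
    rw [← Finset.sum_add_distrib]
    apply Finset.sum_congr rfl
    intro i _
    rw [← hsum i, Finset.sum_filter]
    rw [Finset.sum_add_sum_compl S (fun j => g i j)]
  rw [hsplit, hA, zero_add] at hneg
  linarith
end

section
/- Let G = (V,E) be a finite connected graph with symmetric irreflexive edge relation equipped with a family of dissipation functions f. Let (φ, π) and (φ*, π*) be pairs of flows and potentials satisfying flow conservation for injections q and q* respectively, and both satisfying the potential drop equation with the same family f. Let T ⊆ V be nonempty. If π_t = π*_t for all t ∈ T and q_i ≥ q*_i for all i ∈ V \ T, then q_t ≤ q*_t for all t ∈ T. -/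
open Finset

/-- **Monotonicity of productions with consumptions**: for two solutions
`(φ, π)` and `(φs, πs)` of the flow conservation and potential drop equations
with the same family `f` of dissipation functions, if `π = πs` on a nonempty
set `T` and `q ≥ qs` off `T`, then `q ≤ qs` on `T`. -/
theorem monotonicity_of_productions
    {V : Type*} [Fintype V] [DecidableEq V] [Nonempty V]
    (E : V → V → Prop) [DecidableRel E]
    (hsymm : ∀ i j, E i j → E j i)
    (hirrefl : ∀ i, ¬ E i i)
    (hconn : ∀ u v : V, Relation.ReflTransGen E u v)
    (f : V → V → ℝ → ℝ)
    (hfcont : ∀ i j, E i j → Continuous (f i j))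
    (hfmono : ∀ i j, E i j → StrictMono (f i j))
    (hfsymm : ∀ i j, E i j → ∀ x : ℝ, f i j x = - f j i (-x))
    (T : Finset V) (hT : T.Nonempty)
    (φ φs : V → V → ℝ)
    (hskew : ∀ i j, E i j → φ i j = - φ j i)
    (hskews : ∀ i j, E i j → φs i j = - φs j i)
    (q qs : V → ℝ)
    (hcons : ∀ i : V, (∑ j ∈ univ.filter (fun j => E j i), φ j i) + q i = 0)
    (hconss : ∀ i : V, (∑ j ∈ univ.filter (fun j => E j i), φs j i) + qs i = 0)
    (π πs : V → ℝ)
    (hdrop : ∀ i j, E i j → π j - π i = - f i j (φ i j))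
    (hdrops : ∀ i j, E i j → πs j - πs i = - f i j (φs i j))
    (hπT : ∀ t ∈ T, π t = πs t)
    (hq : ∀ i : V, i ∉ T → q i ≥ qs i) :
    ∀ t ∈ T, q t ≤ qs t := by
  set δ : V → ℝ := fun v => π v - πs v with hδdef
  -- key edge comparison: the difference of f-values equals the difference of δ
  have hfdiff : ∀ j i, E j i → f j i (φ j i) - f j i (φs j i) = δ j - δ i := by
    intro j i h
    have h1 := hdrop j i h
    have h2 := hdrops j i h
    simp only [hδdef]
    linarith
  have key : ∀ j i, E j i → (φs j i ≤ φ j i ↔ δ i ≤ δ j) := by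
    intro j i h
    rw [← (hfmono j i h).le_iff_le]
    have := hfdiff j i h
    constructor <;> intro <;> linarith
  -- δ is nonnegative everywhere
  have hδ0 : ∀ v, 0 ≤ δ v := by
    obtain ⟨i0, -, hmin⟩ := Finset.exists_min_image univ δ univ_nonempty
    by_contra hcon
    push_neg at hcon
    obtain ⟨v, hv⟩ := hcon
    have hm : δ i0 < 0 := lt_of_le_of_lt (hmin v (mem_univ v)) hv
    -- the set of minimizers is closed under adjacency
    have hS : ∀ i, δ i = δ i0 → ∀ j, E j i → δ j = δ i0 := by
      intro i hi j hji
      have hiT : i ∉ T := by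
        intro hiT
        have : δ i = 0 := by simp [hδdef, hπT i hiT]
        rw [hi] at this; linarith
      have hqi : qs i ≤ q i := hq i hiT
      have hsum : ∑ k ∈ univ.filter (fun k => E k i), (φ k i - φs k i)
          = qs i - q i := by
        rw [Finset.sum_sub_distrib]
        have := hcons i; have := hconss i
        linarith
      have hnn : ∀ k ∈ univ.filter (fun k => E k i), 0 ≤ φ k i - φs k i := by
        intro k hk
        rw [Finset.mem_filter] at hk
        have : δ i ≤ δ k := by rw [hi]; exact hmin k (mem_univ k)
        have := (key k i hk.2).mpr this
        linarith
      have hzero : ∑ k ∈ univ.filter (fun k => E k i), (φ k i - φs k i) = 0 :=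
        le_antisymm (by rw [hsum]; linarith) (Finset.sum_nonneg hnn)
      have heach := (Finset.sum_eq_zero_iff_of_nonneg hnn).mp hzero
      have hjmem : j ∈ univ.filter (fun k => E k i) := by
        simp [hji]
      have hφeq : φ j i = φs j i := by
        have := heach j hjmem; linarith
      have := hfdiff j i hji
      rw [hφeq] at this
      rw [← hi]; linarith
    -- propagate along connectedness to a vertex of T
    obtain ⟨t, htT⟩ := hT
    have hprop : ∀ v, Relation.ReflTransGen E i0 v → δ v = δ i0 := by
      intro v h
      induction h with
      | refl => rfl
      | tail hab hbc ih =>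
        exact hS _ ih _ (hsymm _ _ hbc)
    have hδt : δ t = δ i0 := hprop t (hconn i0 t)
    have : δ t = 0 := by simp [hδdef, hπT t htT]
    rw [hδt] at this; linarith
  -- conclude at each t ∈ T
  intro t htT
  have hδt : δ t = 0 := by simp [hδdef, hπT t htT]
  have hle : ∑ j ∈ univ.filter (fun j => E j t), φs j t
      ≤ ∑ j ∈ univ.filter (fun j => E j t), φ j t := by
    apply Finset.sum_le_sum
    intro j hj
    rw [Finset.mem_filter] at hj
    exact (key j t hj.2).mpr (by rw [hδt]; exact hδ0 j)
  have := hcons t; have := hconss t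
  linarith
end

section
/- Let G = (V,E) be a finite connected graph with symmetric irreflexive edge relation, fix a linear order on V, and set O = {(i,j) ∈ E : i < j}. For each (i,j) ∈ O let Ψ_{ij} : ℝ → ℝ be a strictly convex function, let q : V → ℝ, let T ⊆ V be nonempty, and fix boundary values β : T → ℝ. Then the function sending σ : V \ T → ℝ to ∑_{(i,j) ∈ O} Ψ_{ij}(π_i − π_j) − ∑_{i ∈ V} π_i q_i, where π : V → ℝ agrees with σ on V \ T and with β on T, is strictly convex on ℝ^{V \ T}. -/
open Finset

private lemma exists_edge_ne_aux {V : Type*} (E : V → V → Prop) (d : V → ℝ) :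
    ∀ {u v : V}, Relation.ReflTransGen E u v → d u ≠ d v →
      ∃ p q, E p q ∧ d p ≠ d q := by
  intro u v h
  induction h with
  | refl => intro h; exact absurd rfl h
  | @tail b c hpath hedge ih =>
    intro hne
    by_cases hbc : d b = d c
    · exact ih (fun h => hne (h.trans hbc))
    · exact ⟨b, c, hedge, hbc⟩

/-- **Strict convexity of the energy function**: on a finite connected graph
with symmetric irreflexive edge relation, with a fixed linear order on `V` and
the orientation `O = {(i,j) ∈ E : i < j}`, if each `Ψ i j` for `(i,j) ∈ O` is
strictly convex, then for any injections `q`, any nonempty `T ⊆ V` and fixed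
boundary values `β` on `T`, the energy
`σ ↦ ∑_{(i,j) ∈ O} Ψ i j (π i - π j) - ∑ i, π i * q i`, where `π` agrees with
`σ` off `T` and with `β` on `T`, is strictly convex on `ℝ^{V \ T}`. -/
theorem energy_function_strictConvexOn
    {V : Type*} [Fintype V] [DecidableEq V] [LinearOrder V] [Nonempty V]
    (E : V → V → Prop) [DecidableRel E]
    (hsymm : ∀ i j, E i j → E j i)
    (hirrefl : ∀ i, ¬ E i i)
    (hconn : ∀ u v : V, Relation.ReflTransGen E u v)
    (Ψ : V → V → ℝ → ℝ)
    (hΨ : ∀ i j, E i j → i < j → StrictConvexOn ℝ Set.univ (Ψ i j))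
    (q : V → ℝ)
    (T : Finset V) (hT : T.Nonempty)
    (β : {i : V // i ∈ T} → ℝ) :
    StrictConvexOn ℝ (Set.univ : Set ({i : V // i ∉ T} → ℝ))
      (fun σ : {i : V // i ∉ T} → ℝ =>
        (∑ e ∈ (univ : Finset (V × V)).filter (fun e => E e.1 e.2 ∧ e.1 < e.2),
            Ψ e.1 e.2
              ((if h : e.1 ∈ T then β ⟨e.1, h⟩ else σ ⟨e.1, fun h' => h h'⟩) -
               (if h : e.2 ∈ T then β ⟨e.2, h⟩ else σ ⟨e.2, fun h' => h h'⟩))) -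
        ∑ i : V,
          (if h : i ∈ T then β ⟨i, h⟩ else σ ⟨i, fun h' => h h'⟩) * q i) := by
  set π : ({i : V // i ∉ T} → ℝ) → V → ℝ :=
    fun σ i => if h : i ∈ T then β ⟨i, h⟩ else σ ⟨i, fun h' => h h'⟩ with hπ
  refine ⟨convex_univ, ?_⟩
  intro x _ y _ hxy a b ha hb hab
  -- the convex combination acts pointwise through π
  have hz : ∀ i, π (a • x + b • y) i = a * π x i + b * π y i := by
    intro i
    by_cases h : i ∈ T
    · simp only [hπ, dif_pos h]
      have : (a + b) * β ⟨i, h⟩ = β ⟨i, h⟩ := by rw [hab, one_mul]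
      linarith [this]
    · simp [hπ, dif_neg h]
  -- rewrite the goal in terms of π
  show (∑ e ∈ (univ : Finset (V × V)).filter (fun e => E e.1 e.2 ∧ e.1 < e.2),
        Ψ e.1 e.2 (π (a • x + b • y) e.1 - π (a • x + b • y) e.2)) -
      ∑ i : V, π (a • x + b • y) i * q i
      < a • ((∑ e ∈ (univ : Finset (V × V)).filter (fun e => E e.1 e.2 ∧ e.1 < e.2),
        Ψ e.1 e.2 (π x e.1 - π x e.2)) - ∑ i : V, π x i * q i) +
        b • ((∑ e ∈ (univ : Finset (V × V)).filter (fun e => E e.1 e.2 ∧ e.1 < e.2),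
        Ψ e.1 e.2 (π y e.1 - π y e.2)) - ∑ i : V, π y i * q i)
  simp only [smul_eq_mul]
  have hlin : ∑ i : V, π (a • x + b • y) i * q i =
      a * (∑ i : V, π x i * q i) + b * (∑ i : V, π y i * q i) := by
    rw [Finset.mul_sum, Finset.mul_sum, ← Finset.sum_add_distrib]
    refine Finset.sum_congr rfl fun i _ => by rw [hz i]; ring
  have hsum : (∑ e ∈ (univ : Finset (V × V)).filter (fun e => E e.1 e.2 ∧ e.1 < e.2),
        Ψ e.1 e.2 (π (a • x + b • y) e.1 - π (a • x + b • y) e.2)) <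
      a * (∑ e ∈ (univ : Finset (V × V)).filter (fun e => E e.1 e.2 ∧ e.1 < e.2),
        Ψ e.1 e.2 (π x e.1 - π x e.2)) +
      b * (∑ e ∈ (univ : Finset (V × V)).filter (fun e => E e.1 e.2 ∧ e.1 < e.2),
        Ψ e.1 e.2 (π y e.1 - π y e.2)) := by
    rw [Finset.mul_sum, Finset.mul_sum, ← Finset.sum_add_distrib]
    -- find an edge where the differences differ
    obtain ⟨k, hk⟩ := Function.ne_iff.1 hxy
    obtain ⟨t, ht⟩ := hT
    have hdk : π x k.1 ≠ π y k.1 := by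
      simp only [hπ, dif_neg k.2]
      intro h
      exact hk h
    have hdt : π x t = π y t := by simp [hπ, dif_pos ht]
    obtain ⟨p, r, hpr, hne⟩ := exists_edge_ne_aux E (fun i => π x i - π y i)
      (hconn t k.1) (by simp [hdt]; intro h; exact hdk (by linarith))
    have hne' : (π x p - π x r) ≠ (π y p - π y r) := fun h => hne (show π x p - π y p = π x r - π y r by linarith)
    have hedge : ∃ e ∈ (univ : Finset (V × V)).filter
        (fun e => E e.1 e.2 ∧ e.1 < e.2),
        (π x e.1 - π x e.2) ≠ (π y e.1 - π y e.2) := by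
      rcases lt_or_gt_of_ne (fun h : p = r => hirrefl p (h ▸ hpr)) with hlt | hgt
      · exact ⟨(p, r), by simp [Finset.mem_filter, hpr, hlt], hne'⟩
      · exact ⟨(r, p), by simp [Finset.mem_filter, hsymm p r hpr, hgt],
          fun h => hne' (by linarith)⟩
    obtain ⟨e, heO, hene⟩ := hedge
    refine Finset.sum_lt_sum ?_ ⟨e, heO, ?_⟩
    · intro f hf
      rw [Finset.mem_filter] at hf
      have harg : π (a • x + b • y) f.1 - π (a • x + b • y) f.2 =
          a • (π x f.1 - π x f.2) + b • (π y f.1 - π y f.2) := by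
        rw [hz, hz]; simp [smul_eq_mul]; ring
      rw [harg]
      have := (hΨ f.1 f.2 hf.2.1 hf.2.2).convexOn.2
        (Set.mem_univ (π x f.1 - π x f.2)) (Set.mem_univ (π y f.1 - π y f.2))
        ha.le hb.le hab
      simpa [smul_eq_mul] using this
    · rw [Finset.mem_filter] at heO
      have harg : π (a • x + b • y) e.1 - π (a • x + b • y) e.2 =
          a • (π x e.1 - π x e.2) + b • (π y e.1 - π y e.2) := by
        rw [hz, hz]; simp [smul_eq_mul]; ring
      rw [harg]
      have := (hΨ e.1 e.2 heO.2.1 heO.2.2).2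
        (Set.mem_univ (π x e.1 - π x e.2)) (Set.mem_univ (π y e.1 - π y e.2))
        hene ha hb hab
      simpa [smul_eq_mul] using this
  rw [hlin]
  linarith [hsum]
end

section
/- Let G = (V,E) be a finite connected graph with symmetric irreflexive edge relation, fix a linear order on V, and set O = {(i,j) ∈ E : i < j}. Suppose each edge (i,j) ∈ E carries a continuous, strictly increasing function g_{ij} : ℝ → ℝ satisfying g_{ij}(x) = −g_{ji}(−x) for all x, and for (i,j) ∈ O let Ψ_{ij} : ℝ → ℝ be an antiderivative of g_{ij}. Let q : V → ℝ, let T ⊆ V be nonempty, let β : T → ℝ, and define the energy E(π) = ∑_{(i,j) ∈ O} Ψ_{ij}(π_i − π_j) − ∑_{i ∈ V} π_i q_i. Then a potential π : V → ℝ with π = β on T minimizes E among all potentials agreeing with β on T if and only if ∑_{j ∈ ∂i} g_{ji}(π_j − π_i) + q_i = 0 for every i ∈ V \ T. -/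
/-!
Along the segment `t ↦ π + t • d`, the derivative of the energy is a sum over oriented edges of
`g (affine in t) * (d i - d j)`, which is monotone in `t` because every `g i j` is monotone: the
energy is convex along lines. By the antisymmetry `g i j x = - g j i (-x)`, summation by parts turns
that derivative at `t = 0` into `-∑ i, d i * (inflow π i + q i)`. Directions vanishing on `T` are
exactly the admissible ones, so stationarity in all of them is the conservation law off `T`, and for
a convex function stationarity is minimality.
-/

open Finset

section Network

variable {V : Type*} [Fintype V] [LinearOrder V] (E : V → V → Prop) [DecidableRel E]

def orientedEdges : Finset (V × V) :=
  univ.filter fun e => E e.1 e.2 ∧ e.1 < e.2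

def energy (Ψ : V → V → ℝ → ℝ) (q p : V → ℝ) : ℝ :=
  ∑ e ∈ orientedEdges E, Ψ e.1 e.2 (p e.1 - p e.2) - ∑ i, p i * q i

def inflow (g : V → V → ℝ → ℝ) (p : V → ℝ) (i : V) : ℝ :=
  ∑ j ∈ univ.filter (fun j => E j i), g j i (p j - p i)

def energySlope (g : V → V → ℝ → ℝ) (q p d : V → ℝ) : ℝ :=
  ∑ e ∈ orientedEdges E, g e.1 e.2 (p e.1 - p e.2) * (d e.1 - d e.2) - ∑ i, d i * q i

variable {E}

theorem sum_edges_eq_sum_orientedEdges_add_swap {M : Type*} [AddCommMonoid M]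
    (hsymm : ∀ i j, E i j → E j i) (hirrefl : ∀ i, ¬ E i i) (K : V × V → M) :
    ∑ e ∈ univ.filter (fun e : V × V => E e.1 e.2), K e =
      ∑ e ∈ orientedEdges E, (K e + K e.swap) := by
  have hswap : ∑ e ∈ orientedEdges E, K e.swap =
      ∑ e ∈ univ.filter (fun e : V × V => E e.1 e.2 ∧ e.2 < e.1), K e := by
    simp only [orientedEdges, sum_filter]
    refine Fintype.sum_equiv (Equiv.prodComm V V) _ _ fun e => ?_
    simp only [Equiv.prodComm_apply, Prod.fst_swap, Prod.snd_swap]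
    exact if_congr (and_congr_left' ⟨hsymm _ _, hsymm _ _⟩) rfl rfl
  rw [sum_add_distrib, hswap, orientedEdges, sum_filter, sum_filter, sum_filter,
    ← sum_add_distrib]
  refine sum_congr rfl fun e _ => ?_
  rcases lt_trichotomy e.1 e.2 with h | h | h
  · simp [h, h.not_gt]
  · simp [h, hirrefl]
  · simp [h, h.not_gt]

/-- Summation by parts on the graph. -/
theorem sum_orientedEdges_mul_sub (hsymm : ∀ i j, E i j → E j i) (hirrefl : ∀ i, ¬ E i i)
    (f : V → V → ℝ) (hf : ∀ i j, E i j → f i j = - f j i) (d : V → ℝ) :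
    ∑ e ∈ orientedEdges E, f e.1 e.2 * (d e.1 - d e.2) =
      - ∑ i, d i * ∑ j ∈ univ.filter (fun j => E j i), f j i := by
  have hK : ∑ e ∈ univ.filter (fun e : V × V => E e.1 e.2), f e.1 e.2 * d e.2 =
      ∑ i, d i * ∑ j ∈ univ.filter (fun j => E j i), f j i := by
    simp only [sum_filter, Fintype.sum_prod_type, mul_sum]
    rw [sum_comm]
    exact sum_congr rfl fun i _ => sum_congr rfl fun j _ => by split_ifs <;> simp [mul_comm]
  rw [← hK, sum_edges_eq_sum_orientedEdges_add_swap hsymm hirrefl, ← sum_neg_distrib]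
  refine sum_congr rfl fun e he => ?_
  rw [hf e.1 e.2 (mem_filter.mp he).2.1]
  simp only [Prod.fst_swap, Prod.snd_swap]
  ring

theorem energySlope_eq_neg_sum_inflow (hsymm : ∀ i j, E i j → E j i) (hirrefl : ∀ i, ¬ E i i)
    {g : V → V → ℝ → ℝ} (hgsymm : ∀ i j, E i j → ∀ x, g i j x = - g j i (-x)) (q p d : V → ℝ) :
    energySlope E g q p d = - ∑ i, d i * (inflow E g p i + q i) := by
  have hf : ∀ i j, E i j → g i j (p i - p j) = - g j i (p j - p i) := fun i j h => by
    rw [hgsymm i j h, neg_sub]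
  rw [energySlope, sum_orientedEdges_mul_sub hsymm hirrefl _ hf]
  simp only [inflow, mul_add, sum_add_distrib]
  ring

theorem hasDerivAt_energy_line {Ψ g : V → V → ℝ → ℝ}
    (hΨ : ∀ i j, E i j → i < j → ∀ x, HasDerivAt (Ψ i j) (g i j x) x) (q p d : V → ℝ) (t : ℝ) :
    HasDerivAt (fun s : ℝ => energy E Ψ q (p + s • d)) (energySlope E g q (p + t • d) d) t := by
  have hcoord : ∀ i, HasDerivAt (fun s : ℝ => (p + s • d) i) (d i) t := fun i => by
    simpa using ((hasDerivAt_id t).mul_const (d i)).const_add (p i)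
  have hline : ∀ i j, HasDerivAt (fun s : ℝ => (p + s • d) i - (p + s • d) j) (d i - d j) t :=
    fun i j => (hcoord i).fun_sub (hcoord j)
  have hedges := HasDerivAt.fun_sum fun e (he : e ∈ orientedEdges E) =>
    (hΨ e.1 e.2 (mem_filter.mp he).2.1 (mem_filter.mp he).2.2 _).comp t (hline e.1 e.2)
  have hload : HasDerivAt (fun s : ℝ => ∑ i, (p + s • d) i * q i) (∑ i, d i * q i) t :=
    HasDerivAt.fun_sum fun i _ => (hcoord i).mul_const (q i)
  exact hedges.sub hload

theorem Monotone.apply_add_mul_mul {g : ℝ → ℝ} (hg : Monotone g) (a c : ℝ) :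
    Monotone fun t : ℝ => g (a + t * c) * c := by
  intro s t hst
  rcases le_or_gt 0 c with hc | hc
  · exact mul_le_mul_of_nonneg_right (hg (by nlinarith)) hc
  · exact mul_le_mul_of_nonpos_right (hg (by nlinarith)) hc.le

theorem monotone_energySlope_line {g : V → V → ℝ → ℝ} (hgmono : ∀ i j, E i j → Monotone (g i j))
    (q p d : V → ℝ) : Monotone fun t : ℝ => energySlope E g q (p + t • d) d := by
  intro s t hst
  refine sub_le_sub_right (sum_le_sum fun e he => ?_) _
  have key := (hgmono e.1 e.2 (mem_filter.mp he).2.1).apply_add_mul_mul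
    (p e.1 - p e.2) (d e.1 - d e.2) hst
  simp only [Pi.add_apply, Pi.smul_apply, smul_eq_mul]
  convert key using 3 <;> ring

theorem energy_le_of_energySlope_nonneg {Ψ g : V → V → ℝ → ℝ}
    (hgmono : ∀ i j, E i j → Monotone (g i j))
    (hΨ : ∀ i j, E i j → i < j → ∀ x, HasDerivAt (Ψ i j) (g i j x) x) (q p p' : V → ℝ)
    (hslope : 0 ≤ energySlope E g q p (p' - p)) : energy E Ψ q p ≤ energy E Ψ q p' := by
  set φ := fun s : ℝ => energy E Ψ q (p + s • (p' - p))
  have hφ (t : ℝ) := hasDerivAt_energy_line hΨ q p (p' - p) t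
  have hφmono : MonotoneOn φ (Set.Icc 0 1) := by
    refine monotoneOn_of_deriv_nonneg (convex_Icc 0 1)
      (fun t _ => (hφ t).continuousAt.continuousWithinAt)
      (fun t _ => (hφ t).differentiableAt.differentiableWithinAt) fun t ht => ?_
    rw [(hφ t).deriv]
    have h0 : energySlope E g q p (p' - p) ≤ energySlope E g q (p + t • (p' - p)) (p' - p) := by
      simpa using monotone_energySlope_line hgmono q p (p' - p) (interior_subset ht).1
    exact hslope.trans h0
  simpa [φ] using hφmono (Set.left_mem_Icc.2 zero_le_one) (Set.right_mem_Icc.2 zero_le_one)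
    zero_le_one

theorem energySlope_eq_zero_of_forall_energy_le {Ψ g : V → V → ℝ → ℝ}
    (hΨ : ∀ i j, E i j → i < j → ∀ x, HasDerivAt (Ψ i j) (g i j x) x) (q p d : V → ℝ)
    (hmin : ∀ t : ℝ, energy E Ψ q p ≤ energy E Ψ q (p + t • d)) : energySlope E g q p d = 0 := by
  have hlocal : IsLocalMin (fun s : ℝ => energy E Ψ q (p + s • d)) 0 :=
    Filter.Eventually.of_forall fun t => by simpa using hmin t
  simpa using hlocal.hasDerivAt_eq_zero (hasDerivAt_energy_line hΨ q p d 0)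

end Network

theorem energy_minimizer_iff_flow_conservation_general
    {V : Type*} [Fintype V] [LinearOrder V]
    (E : V → V → Prop) [DecidableRel E]
    (hsymm : ∀ i j, E i j → E j i)
    (hirrefl : ∀ i, ¬ E i i)
    (g : V → V → ℝ → ℝ)
    (hgmono : ∀ i j, E i j → StrictMono (g i j))
    (hgsymm : ∀ i j, E i j → ∀ x : ℝ, g i j x = - g j i (-x))
    (Ψ : V → V → ℝ → ℝ)
    (hΨ : ∀ i j, E i j → i < j → ∀ x : ℝ, HasDerivAt (Ψ i j) (g i j x) x)
    (q : V → ℝ)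
    (T : Finset V)
    (β : {i : V // i ∈ T} → ℝ)
    (π : V → ℝ)
    (hπβ : ∀ t (h : t ∈ T), π t = β ⟨t, h⟩) :
    (∀ π' : V → ℝ, (∀ t (h : t ∈ T), π' t = β ⟨t, h⟩) →
        ((∑ e ∈ (univ : Finset (V × V)).filter (fun e => E e.1 e.2 ∧ e.1 < e.2),
            Ψ e.1 e.2 (π e.1 - π e.2)) - ∑ i : V, π i * q i) ≤
        ((∑ e ∈ (univ : Finset (V × V)).filter (fun e => E e.1 e.2 ∧ e.1 < e.2),
            Ψ e.1 e.2 (π' e.1 - π' e.2)) - ∑ i : V, π' i * q i))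
    ↔
    (∀ i : V, i ∉ T →
        (∑ j ∈ univ.filter (fun j => E j i), g j i (π j - π i)) + q i = 0) := by
  change (∀ π' : V → ℝ, (∀ t (h : t ∈ T), π' t = β ⟨t, h⟩) →
      energy E Ψ q π ≤ energy E Ψ q π') ↔ ∀ i, i ∉ T → inflow E g π i + q i = 0
  have hslope := energySlope_eq_neg_sum_inflow hsymm hirrefl hgsymm q π
  constructor
  · intro hmin i hi
    have hstat := energySlope_eq_zero_of_forall_energy_le hΨ q π (Pi.single i 1) fun t =>
      hmin _ fun s hs => by simp [hπβ s hs, show s ≠ i from fun h => hi (h ▸ hs)]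
    simpa only [hslope, neg_eq_zero, Pi.single_apply, ite_mul, one_mul, zero_mul, sum_ite_eq',
      mem_univ, if_true] using hstat
  · intro hcons π' hπ'
    refine energy_le_of_energySlope_nonneg (fun i j h => (hgmono i j h).monotone) hΨ q π π' ?_
    rw [hslope, neg_nonneg]
    refine (sum_eq_zero fun i _ => ?_).le
    by_cases hi : i ∈ T
    · simp [hπβ i hi, hπ' i hi]
    · simp [hcons i hi]

/-- **Variational characterization of dissipative flow solutions**: with the
orientation `O = {(i,j) ∈ E : i < j}`, edge functions `g i j` continuous,
strictly increasing and satisfying `g i j x = - g j i (-x)`, and `Ψ i j` an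
antiderivative of `g i j` on oriented edges, a potential `π` agreeing with the
boundary values `β` on a nonempty `T ⊆ V` minimizes the energy
`E(π) = ∑_{(i,j) ∈ O} Ψ i j (π i - π j) - ∑ i, π i * q i` among all potentials
agreeing with `β` on `T` if and only if the flow conservation equation
`∑_{j ∈ ∂ i} g j i (π j - π i) + q i = 0` holds at every node `i ∉ T`. -/
theorem energy_minimizer_iff_flow_conservation
    {V : Type*} [Fintype V] [DecidableEq V] [LinearOrder V] [Nonempty V]
    (E : V → V → Prop) [DecidableRel E]
    (hsymm : ∀ i j, E i j → E j i)
    (hirrefl : ∀ i, ¬ E i i)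
    (hconn : ∀ u v : V, Relation.ReflTransGen E u v)
    (g : V → V → ℝ → ℝ)
    (hgcont : ∀ i j, E i j → Continuous (g i j))
    (hgmono : ∀ i j, E i j → StrictMono (g i j))
    (hgsymm : ∀ i j, E i j → ∀ x : ℝ, g i j x = - g j i (-x))
    (Ψ : V → V → ℝ → ℝ)
    (hΨ : ∀ i j, E i j → i < j → ∀ x : ℝ, HasDerivAt (Ψ i j) (g i j x) x)
    (q : V → ℝ)
    (T : Finset V) (hT : T.Nonempty)
    (β : {i : V // i ∈ T} → ℝ)
    (π : V → ℝ)
    (hπβ : ∀ t (h : t ∈ T), π t = β ⟨t, h⟩) :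
    (∀ π' : V → ℝ, (∀ t (h : t ∈ T), π' t = β ⟨t, h⟩) →
        ((∑ e ∈ (univ : Finset (V × V)).filter (fun e => E e.1 e.2 ∧ e.1 < e.2),
            Ψ e.1 e.2 (π e.1 - π e.2)) - ∑ i : V, π i * q i) ≤
        ((∑ e ∈ (univ : Finset (V × V)).filter (fun e => E e.1 e.2 ∧ e.1 < e.2),
            Ψ e.1 e.2 (π' e.1 - π' e.2)) - ∑ i : V, π' i * q i))
    ↔
    (∀ i : V, i ∉ T →
        (∑ j ∈ univ.filter (fun j => E j i), g j i (π j - π i)) + q i = 0) :=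
  energy_minimizer_iff_flow_conservation_general E hsymm hirrefl g hgmono hgsymm Ψ hΨ q T β π hπβ
end

section
/- Let G = (V,E) be a finite connected graph with symmetric irreflexive edge relation, where each edge (i,j) ∈ E carries a continuous, strictly increasing bijection f_{ij} : ℝ → ℝ satisfying f_{ij}(x) = −f_{ji}(−x) for all x. Let T ⊆ V be nonempty, let β : T → ℝ, and let q : V \ T → ℝ. Then there is at most one potential π : V → ℝ with π_t = β_t for all t ∈ T such that ∑_{j ∈ ∂i} f_{ji}^{-1}(π_j − π_i) + q_i = 0 for every i ∈ V \ T. -/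
open Finset

/-- **Uniqueness of dissipative flow solutions**: on a finite connected graph
with symmetric irreflexive edge relation, with each edge carrying a continuous
strictly increasing bijection `f i j : ℝ → ℝ` satisfying `f i j x = - f j i (-x)`
(with inverse `finv i j`), for a nonempty `T ⊆ V`, boundary values `β` on `T`
and injections `q` off `T`, there is at most one potential `π : V → ℝ` agreeing
with `β` on `T` and satisfying `∑_{j ∈ ∂ i} f⁻¹ j i (π j - π i) + q i = 0` at
every node `i ∉ T`. -/
theorem dissipative_potential_unique
    {V : Type*} [Fintype V] [DecidableEq V] [Nonempty V]
    (E : V → V → Prop) [DecidableRel E]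
    (hsymm : ∀ i j, E i j → E j i)
    (hirrefl : ∀ i, ¬ E i i)
    (hconn : ∀ u v : V, Relation.ReflTransGen E u v)
    (f : V → V → ℝ → ℝ)
    (hfcont : ∀ i j, E i j → Continuous (f i j))
    (hfmono : ∀ i j, E i j → StrictMono (f i j))
    (hfbij : ∀ i j, E i j → Function.Bijective (f i j))
    (hfsymm : ∀ i j, E i j → ∀ x : ℝ, f i j x = - f j i (-x))
    (finv : V → V → ℝ → ℝ)
    (hfinv : ∀ i j, E i j →
      Function.LeftInverse (finv i j) (f i j) ∧
      Function.RightInverse (finv i j) (f i j))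
    (T : Finset V) (hT : T.Nonempty)
    (β : {i : V // i ∈ T} → ℝ)
    (q : {i : V // i ∉ T} → ℝ) :
    ∀ π π' : V → ℝ,
      (∀ t (h : t ∈ T), π t = β ⟨t, h⟩) →
      (∀ i (h : i ∉ T),
        (∑ j ∈ univ.filter (fun j => E j i), finv j i (π j - π i)) + q ⟨i, h⟩ = 0) →
      (∀ t (h : t ∈ T), π' t = β ⟨t, h⟩) →
      (∀ i (h : i ∉ T),
        (∑ j ∈ univ.filter (fun j => E j i), finv j i (π' j - π' i)) + q ⟨i, h⟩ = 0) →
      π = π' := by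
  -- monotonicity and injectivity of the inverses
  have hinvmono : ∀ i j, E i j → Monotone (finv i j) := by
    intro i j he a b hab
    have h := hfinv i j he
    have : f i j (finv i j a) ≤ f i j (finv i j b) := by rw [h.2 a, h.2 b]; exact hab
    exact ((hfmono i j he).le_iff_le).mp this
  have hinvinj : ∀ i j, E i j → Function.Injective (finv i j) := by
    intro i j he a b hab
    have h := hfinv i j he
    have := congrArg (f i j) hab
    rwa [h.2 a, h.2 b] at this
  -- key one-sided comparison lemma
  have key : ∀ π π' : V → ℝ,
      (∀ t ∈ T, π t = π' t) →
      (∀ i (h : i ∉ T),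
        (∑ j ∈ univ.filter (fun j => E j i), finv j i (π j - π i)) + q ⟨i, h⟩ = 0) →
      (∀ i (h : i ∉ T),
        (∑ j ∈ univ.filter (fun j => E j i), finv j i (π' j - π' i)) + q ⟨i, h⟩ = 0) →
      ∀ v, π v ≤ π' v := by
    intro π π' hbd heq heq' v
    -- take a maximizer of u = π - π'
    obtain ⟨i, -, hi⟩ := Finset.exists_max_image (univ : Finset V)
      (fun x => π x - π' x) ⟨Classical.arbitrary V, mem_univ _⟩
    have hi' : ∀ a : V, π a - π' a ≤ π i - π' i := fun a => hi a (mem_univ a)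
    set M := π i - π' i with hM
    -- propagate the max value along edges
    have claim : ∀ b, Relation.ReflTransGen E i b → (M ≤ 0 ∨ π b - π' b = M) := by
      intro b hb
      induction hb with
      | refl => exact Or.inr rfl
      | tail hb hbc ih =>
        rename_i x c
        rcases ih with h | h
        · exact Or.inl h
        · by_cases hx : x ∈ T
          · left
            have : π x - π' x = 0 := by rw [hbd x hx]; ring
            rw [← h, this]
          · right
            have e1 := heq x hx
            have e2 := heq' x hx
            have hsum : (∑ j ∈ univ.filter (fun j => E j x), finv j x (π j - π x))
                = ∑ j ∈ univ.filter (fun j => E j x), finv j x (π' j - π' x) := by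
              have := e1.trans e2.symm
              linarith
            have hle : ∀ j ∈ univ.filter (fun j => E j x),
                finv j x (π j - π x) ≤ finv j x (π' j - π' x) := by
              intro j hj
              have hjx : E j x := (mem_filter.mp hj).2
              apply hinvmono j x hjx
              have h1 : π j - π' j ≤ M := hi' j
              have h2 : π x - π' x = M := h
              linarith
            have hall := (Finset.sum_eq_sum_iff_of_le hle).mp hsum
            have hcx : E c x := hsymm x c hbc
            have hc := hall c (mem_filter.mpr ⟨mem_univ c, hcx⟩)
            have := hinvinj c x hcx hc
            have : π c - π x = π' c - π' x := this
            have : π c - π' c = π x - π' x := by linarith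
            rw [this, h]
    obtain ⟨t, ht⟩ := hT
    have hM0 : M ≤ 0 := by
      rcases claim t (hconn i t) with h | h
      · exact h
      · have := hbd t ht; linarith
    have := hi' v
    linarith
  intro π π' hβ heq hβ' heq'
  have hbd : ∀ t ∈ T, π t = π' t := fun t ht => by rw [hβ t ht, hβ' t ht]
  have hbd' : ∀ t ∈ T, π' t = π t := fun t ht => (hbd t ht).symm
  funext v
  exact le_antisymm (key π π' hbd heq heq' v) (key π' π hbd' heq' heq v)
end

section
/- Let G = (V,E) be a finite connected graph with symmetric irreflexive edge relation, where each edge (i,j) ∈ E carries a continuous, strictly increasing bijection f_{ij} : ℝ → ℝ satisfying f_{ij}(x) = −f_{ji}(−x). Let T ⊆ V be nonempty and let β : T → ℝ. Suppose q, q' : V \ T → ℝ satisfy q_i ≤ q'_i for all i ∈ V \ T, and let π, π' : V → ℝ be potentials agreeing with β on T that satisfy ∑_{j ∈ ∂i} f_{ji}^{-1}(π_j − π_i) + q_i = 0 and ∑_{j ∈ ∂i} f_{ji}^{-1}(π'_j − π'_i) + q'_i = 0 for every i ∈ V \ T. Then π_i ≤ π'_i for all i ∈ V; that is, the solution potentials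 are monotone nondecreasing functions of the injections on V \ T. -/
open Finset

/-- **Monotonicity of solution potentials in the injections**: with the same
dissipative setup and boundary values `β` on a nonempty `T ⊆ V`, if `q ≤ q'`
off `T` and `π`, `π'` are corresponding solution potentials agreeing with `β`
on `T`, then `π ≤ π'` everywhere on `V`. -/
theorem dissipative_potential_monotone
    {V : Type*} [Fintype V] [DecidableEq V] [Nonempty V]
    (E : V → V → Prop) [DecidableRel E]
    (hsymm : ∀ i j, E i j → E j i)
    (hirrefl : ∀ i, ¬ E i i)
    (hconn : ∀ u v : V, Relation.ReflTransGen E u v)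
    (f : V → V → ℝ → ℝ)
    (hfcont : ∀ i j, E i j → Continuous (f i j))
    (hfmono : ∀ i j, E i j → StrictMono (f i j))
    (hfbij : ∀ i j, E i j → Function.Bijective (f i j))
    (hfsymm : ∀ i j, E i j → ∀ x : ℝ, f i j x = - f j i (-x))
    (finv : V → V → ℝ → ℝ)
    (hfinv : ∀ i j, E i j →
      Function.LeftInverse (finv i j) (f i j) ∧
      Function.RightInverse (finv i j) (f i j))
    (T : Finset V) (hT : T.Nonempty)
    (β : {i : V // i ∈ T} → ℝ)
    (q q' : {i : V // i ∉ T} → ℝ)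
    (hq : ∀ i : {i : V // i ∉ T}, q i ≤ q' i) :
    ∀ π π' : V → ℝ,
      (∀ t (h : t ∈ T), π t = β ⟨t, h⟩) →
      (∀ i (h : i ∉ T),
        (∑ j ∈ univ.filter (fun j => E j i), finv j i (π j - π i)) + q ⟨i, h⟩ = 0) →
      (∀ t (h : t ∈ T), π' t = β ⟨t, h⟩) →
      (∀ i (h : i ∉ T),
        (∑ j ∈ univ.filter (fun j => E j i), finv j i (π' j - π' i)) + q' ⟨i, h⟩ = 0) →
      ∀ i : V, π i ≤ π' i := by
  intro π π'
  intro hπT hπq hπ'T hπ'q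
  by_contra hcon
  push_neg at hcon
  obtain ⟨i1, hi1⟩ := hcon
  set g : V → ℝ := fun i => π i - π' i with hg
  obtain ⟨i0, -, hi0⟩ := Finset.exists_max_image Finset.univ g ⟨i1, mem_univ i1⟩
  set M := g i0 with hM
  have hMpos : 0 < M := lt_of_lt_of_le (by simp only [hg]; linarith) (hi0 i1 (mem_univ i1))
  have hmono : ∀ j u, E j u → StrictMono (finv j u) := by
    intro j u hEju a b hab
    have hf := hfmono j u hEju
    have hri := (hfinv j u hEju).2
    exact hf.lt_iff_lt.mp (by rw [hri a, hri b]; exact hab)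
  have key : ∀ u, g u = M → ∀ v, E u v → g v = M := by
    intro u hgu v hEuv
    by_cases huT : u ∈ T
    · exfalso
      have h0 : g u = 0 := by simp [hg, hπT u huT, hπ'T u huT]
      linarith
    · have hEvu : E v u := hsymm u v hEuv
      have h1 := hπq u huT
      have h2 := hπ'q u huT
      have hle : ∀ j ∈ univ.filter (fun j => E j u),
          finv j u (π j - π u) ≤ finv j u (π' j - π' u) := by
        intro j hj
        have hEju : E j u := (mem_filter.mp hj).2
        have hgj : g j ≤ M := hi0 j (mem_univ j)
        have : π j - π u ≤ π' j - π' u := by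
          simp only [hg] at hgj hgu; linarith
        exact (hmono j u hEju).monotone this
      by_contra hne
      have hlt : g v < M := lt_of_le_of_ne (hi0 v (mem_univ v)) hne
      have hvmem : v ∈ univ.filter (fun j => E j u) := by
        simp [hEvu]
      have hstrict : finv v u (π v - π u) < finv v u (π' v - π' u) := by
        apply hmono v u hEvu
        simp only [hg] at hlt hgu; linarith
      have hsumlt := Finset.sum_lt_sum hle ⟨v, hvmem, hstrict⟩
      have hqq := hq ⟨u, huT⟩
      linarith
  obtain ⟨t, ht⟩ := hT
  have walk := hconn i0 t
  have main : ∀ u, Relation.ReflTransGen E u t → g u = M → False := by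
    intro u hwalk
    induction hwalk using Relation.ReflTransGen.head_induction_on with
    | refl =>
      intro h
      have h0 : g t = 0 := by simp [hg, hπT t ht, hπ'T t ht]
      linarith
    | head hE hrest ih =>
      intro hgu
      exact ih (key _ hgu _ hE)
  exact main i0 walk rfl
end

section
/- Let G = (V,E) be a finite connected graph with symmetric irreflexive edge relation, where each edge (i,j) ∈ E carries a continuous strictly increasing bijection f_{ij} : ℝ → ℝ with f_{ij}(x) = −f_{ji}(−x). Let T ⊆ V be nonempty, β : T → ℝ, and for each q : V \ T → ℝ let π̃(q) : V → ℝ denote the unique potential agreeing with β on T and satisfying ∑_{j ∈ ∂i} f_{ji}^{-1}(π̃(q)_j − π̃(q)_i) + q_i = 0 for all i ∈ V \ T. Let q̲, q̄ : V \ T → ℝ with q̲_i ≤ q̄_i for all i, and let π̲, π̄ : V \ T → ℝ. Then the robust feasibility condition [for every q with q̲_i ≤ q_i ≤ q̄_i for all i ∈ V \ T, one has π̲_i ≤ π̃(q)_i ≤ π̄_i for all i ∈ V \ T] holds if and only if the two extreme conditions [π̲_i ≤ π̃(q̲)_i for all i ∈ V \ T] and [π̃(q̄)_i ≤ π̄_i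 for all i ∈ V \ T] hold. -/
open Finset

/-- **Robust feasibility reduces to the two extreme scenarios**: with the
dissipative setup, let `πt q` denote the (unique) solution potential with
boundary values `β` on the nonempty set `T` for injections `q` off `T`. Given
bounds `qlo ≤ qhi` on the injections and potential bounds `πlo`, `πhi` off `T`,
the robust feasibility condition — for every `q` with `qlo ≤ q ≤ qhi`
(componentwise) one has `πlo ≤ πt q ≤ πhi` off `T` — holds if and only if the
two extreme conditions `πlo ≤ πt qlo` and `πt qhi ≤ πhi` (off `T`) hold. -/
theorem robust_feasibility_iff_extreme_scenarios
    {V : Type*} [Fintype V] [DecidableEq V] [Nonempty V]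
    (E : V → V → Prop) [DecidableRel E]
    (hsymm : ∀ i j, E i j → E j i)
    (hirrefl : ∀ i, ¬ E i i)
    (hconn : ∀ u v : V, Relation.ReflTransGen E u v)
    (f : V → V → ℝ → ℝ)
    (hfcont : ∀ i j, E i j → Continuous (f i j))
    (hfmono : ∀ i j, E i j → StrictMono (f i j))
    (hfbij : ∀ i j, E i j → Function.Bijective (f i j))
    (hfsymm : ∀ i j, E i j → ∀ x : ℝ, f i j x = - f j i (-x))
    (finv : V → V → ℝ → ℝ)
    (hfinv : ∀ i j, E i j →
      Function.LeftInverse (finv i j) (f i j) ∧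
      Function.RightInverse (finv i j) (f i j))
    (T : Finset V) (hT : T.Nonempty)
    (β : {i : V // i ∈ T} → ℝ)
    (πt : ({i : V // i ∉ T} → ℝ) → V → ℝ)
    (hπtβ : ∀ (q : {i : V // i ∉ T} → ℝ) (t : V) (h : t ∈ T), πt q t = β ⟨t, h⟩)
    (hπtcons : ∀ (q : {i : V // i ∉ T} → ℝ) (i : V) (h : i ∉ T),
      (∑ j ∈ univ.filter (fun j => E j i), finv j i (πt q j - πt q i)) + q ⟨i, h⟩ = 0)
    (qlo qhi : {i : V // i ∉ T} → ℝ)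
    (hlohi : ∀ i : {i : V // i ∉ T}, qlo i ≤ qhi i)
    (πlo πhi : {i : V // i ∉ T} → ℝ) :
    (∀ q : {i : V // i ∉ T} → ℝ,
        (∀ i : {i : V // i ∉ T}, qlo i ≤ q i ∧ q i ≤ qhi i) →
        ∀ i : {i : V // i ∉ T}, πlo i ≤ πt q i.val ∧ πt q i.val ≤ πhi i)
    ↔
    ((∀ i : {i : V // i ∉ T}, πlo i ≤ πt qlo i.val) ∧
     (∀ i : {i : V // i ∉ T}, πt qhi i.val ≤ πhi i)) := by

  constructor
  · intro h
    exact ⟨fun i => (h qlo (fun j => ⟨le_refl _, hlohi j⟩) i).1,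
           fun i => (h qhi (fun j => ⟨hlohi j, le_refl _⟩) i).2⟩
  · rintro ⟨h1, h2⟩ q hq i
    have key : ∀ q1 q2 : {i : V // i ∉ T} → ℝ, (∀ j, q1 j ≤ q2 j) →
        ∀ v : V, πt q1 v ≤ πt q2 v := by
      intro q1 q2 hq12 v
      by_contra hv
      push_neg at hv
      set g : V → ℝ := fun u => πt q1 u - πt q2 u with hg
      obtain ⟨i0, -, hi0⟩ := Finset.exists_max_image univ g ⟨v, mem_univ v⟩
      set m := g i0 with hm
      have hm_pos : 0 < m := lt_of_lt_of_le (by simp [hg]; linarith) (hi0 v (mem_univ v))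
      have hP : ∀ u, g u = m → ∀ w, E u w → g w = m := by
        intro u hu w huw
        have huT : u ∉ T := by
          intro hT'
          have h0 : g u = 0 := by simp [hg, hπtβ q1 u hT', hπtβ q2 u hT']
          rw [hu] at h0; linarith
        have c1 := hπtcons q1 u huT
        have c2 := hπtcons q2 u huT
        have hterm : ∀ j ∈ univ.filter (fun j => E j u),
            finv j u (πt q1 j - πt q1 u) ≤ finv j u (πt q2 j - πt q2 u) := by
          intro j hj
          have hju : E j u := (mem_filter.mp hj).2
          have hmono : Monotone (finv j u) := by
            intro x y hxy
            by_contra hc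
            push_neg at hc
            have := hfmono j u hju hc
            rw [(hfinv j u hju).2 x, (hfinv j u hju).2 y] at this
            linarith
          apply hmono
          have hj2 : g j ≤ m := hi0 j (mem_univ j)
          rw [← hu] at hj2
          simp only [hg] at hj2
          linarith
        have hsum : (∑ j ∈ univ.filter (fun j => E j u),
              finv j u (πt q2 j - πt q2 u)) ≤
            ∑ j ∈ univ.filter (fun j => E j u), finv j u (πt q1 j - πt q1 u) := by
          have := hq12 ⟨u, huT⟩
          linarith
        have heq := (Finset.sum_eq_sum_iff_of_le hterm).mp
          (le_antisymm (Finset.sum_le_sum hterm) hsum)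
        have hwu : E w u := hsymm u w huw
        have hweq := heq w (mem_filter.mpr ⟨mem_univ w, hwu⟩)
        have hinj : πt q1 w - πt q1 u = πt q2 w - πt q2 u := by
          have := congrArg (f w u) hweq
          rwa [(hfinv w u hwu).2, (hfinv w u hwu).2] at this
        have hgu : g u = m := hu
        simp only [hg] at hgu ⊢
        linarith
      have hclosed : ∀ u, Relation.ReflTransGen E i0 u → g u = m := by
        intro u hu
        induction hu with
        | refl => rfl
        | tail _ hstep ih => exact hP _ ih _ hstep
      obtain ⟨t, ht⟩ := hT
      have hgt := hclosed t (hconn i0 t)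
      have : g t = 0 := by simp [hg, hπtβ q1 t ht, hπtβ q2 t ht]
      rw [hgt] at this; linarith
    exact ⟨le_trans (h1 i) (key qlo q (fun j => (hq j).1) i.val),
           le_trans (key q qhi (fun j => (hq j).2) i.val) (h2 i)⟩
end

section
/- Let G = (V,E) be a finite connected graph with symmetric irreflexive edge relation, where each edge (i,j) ∈ E carries a continuous strictly increasing bijection f_{ij} : ℝ → ℝ with f_{ij}(x) = −f_{ji}(−x). Let T ⊆ V be nonempty, β : T → ℝ, and let q, q' : V \ T → ℝ with q_i ≤ q'_i for all i ∈ V \ T. Let π, π' : V → ℝ be potentials agreeing with β on T and satisfying ∑_{j ∈ ∂i} f_{ji}^{-1}(π_j − π_i) + q_i = 0 and ∑_{j ∈ ∂i} f_{ji}^{-1}(π'_j − π'_i) + q'_i = 0 for every i ∈ V \ T. Define the reconstructed terminal productions q_t = −∑_{j ∈ ∂t} f_{jt}^{-1}(π_j − π_t) and q'_t = −∑_{j ∈ ∂t} f_{jt}^{-1}(π'_j − π'_t) for t ∈ T. Then q_t ≥ q'_t for every t ∈ T, and consequently for any family of nondecreasing functions h_t : ℝ → ℝ (t ∈ T) one has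 ∑_{t ∈ T} h_t(q_t) ≥ ∑_{t ∈ T} h_t(q'_t). -/
open Finset

/-- **Monotonicity of terminal productions in the injections**: with the
dissipative setup, if `q ≤ q'` off the nonempty terminal set `T` and `π`, `π'`
are corresponding solution potentials agreeing with `β` on `T`, then the
reconstructed terminal productions `q_t = -∑_{j ∈ ∂ t} f⁻¹ j t (π j - π t)`
satisfy `q_t ≥ q'_t` for every `t ∈ T`; consequently, for any family of
nondecreasing functions `h t : ℝ → ℝ` (`t ∈ T`),
`∑_{t ∈ T} h t q_t ≥ ∑_{t ∈ T} h t q'_t`. -/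
theorem terminal_production_monotone
    {V : Type*} [Fintype V] [DecidableEq V] [Nonempty V]
    (E : V → V → Prop) [DecidableRel E]
    (hsymm : ∀ i j, E i j → E j i)
    (hirrefl : ∀ i, ¬ E i i)
    (hconn : ∀ u v : V, Relation.ReflTransGen E u v)
    (f : V → V → ℝ → ℝ)
    (hfcont : ∀ i j, E i j → Continuous (f i j))
    (hfmono : ∀ i j, E i j → StrictMono (f i j))
    (hfbij : ∀ i j, E i j → Function.Bijective (f i j))
    (hfsymm : ∀ i j, E i j → ∀ x : ℝ, f i j x = - f j i (-x))
    (finv : V → V → ℝ → ℝ)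
    (hfinv : ∀ i j, E i j →
      Function.LeftInverse (finv i j) (f i j) ∧
      Function.RightInverse (finv i j) (f i j))
    (T : Finset V) (hT : T.Nonempty)
    (β : {i : V // i ∈ T} → ℝ)
    (q q' : {i : V // i ∉ T} → ℝ)
    (hq : ∀ i : {i : V // i ∉ T}, q i ≤ q' i)
    (π π' : V → ℝ)
    (hπβ : ∀ t (h : t ∈ T), π t = β ⟨t, h⟩)
    (hπcons : ∀ i (h : i ∉ T),
      (∑ j ∈ univ.filter (fun j => E j i), finv j i (π j - π i)) + q ⟨i, h⟩ = 0)
    (hπ'β : ∀ t (h : t ∈ T), π' t = β ⟨t, h⟩)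
    (hπ'cons : ∀ i (h : i ∉ T),
      (∑ j ∈ univ.filter (fun j => E j i), finv j i (π' j - π' i)) + q' ⟨i, h⟩ = 0) :
    (∀ t ∈ T,
      (- ∑ j ∈ univ.filter (fun j => E j t), finv j t (π j - π t)) ≥
      (- ∑ j ∈ univ.filter (fun j => E j t), finv j t (π' j - π' t))) ∧
    ∀ h : V → ℝ → ℝ, (∀ t ∈ T, Monotone (h t)) →
      (∑ t ∈ T, h t (- ∑ j ∈ univ.filter (fun j => E j t), finv j t (π j - π t))) ≥
      (∑ t ∈ T, h t (- ∑ j ∈ univ.filter (fun j => E j t), finv j t (π' j - π' t))) := by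
  -- finv is monotone and injective
  have hfinvmono : ∀ i j, E i j → Monotone (finv i j) := by
    intro i j hE a b hab
    by_contra hlt
    push_neg at hlt
    have h2 := (hfmono i j hE) hlt
    rw [(hfinv i j hE).2 a, (hfinv i j hE).2 b] at h2
    exact absurd hab (not_le.mpr h2)
  have hfinvinj : ∀ i j, E i j → Function.Injective (finv i j) := by
    intro i j hE a b hab
    have := congrArg (f i j) hab
    rwa [(hfinv i j hE).2 a, (hfinv i j hE).2 b] at this
  -- maximum of π - π'
  obtain ⟨i0, -, hmax⟩ := Finset.exists_max_image (univ : Finset V)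
    (fun i => π i - π' i) ⟨Classical.arbitrary V, mem_univ _⟩
  set δ := π i0 - π' i0 with hδ
  have hmax' : ∀ i : V, π i - π' i ≤ δ := fun i => hmax i (mem_univ i)
  have hδle : δ ≤ 0 := by
    by_contra hpos
    push_neg at hpos
    -- maximum set is closed under neighbors
    have hS : ∀ i, π i - π' i = δ → ∀ j, E j i → π j - π' j = δ := by
      intro i hi j hEji
      have hiT : i ∉ T := by
        intro hmem
        rw [hπβ i hmem, hπ'β i hmem] at hi
        simp at hi
        linarith
      have h1 := hπcons i hiT
      have h2 := hπ'cons i hiT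
      have hterm : ∀ j' ∈ univ.filter (fun j' => E j' i),
          finv j' i (π j' - π i) ≤ finv j' i (π' j' - π' i) := by
        intro j' hj'
        have hE' : E j' i := (mem_filter.mp hj').2
        apply hfinvmono j' i hE'
        have := hmax' j'
        linarith
      have hsumle : (∑ j' ∈ univ.filter (fun j' => E j' i), finv j' i (π j' - π i)) ≤
          ∑ j' ∈ univ.filter (fun j' => E j' i), finv j' i (π' j' - π' i) :=
        Finset.sum_le_sum hterm
      have hqle := hq ⟨i, hiT⟩
      have hsumeq : (∑ j' ∈ univ.filter (fun j' => E j' i), finv j' i (π j' - π i)) =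
          ∑ j' ∈ univ.filter (fun j' => E j' i), finv j' i (π' j' - π' i) := by
        linarith
      have heach := (Finset.sum_eq_sum_iff_of_le hterm).mp hsumeq j
        (mem_filter.mpr ⟨mem_univ j, hEji⟩)
      have := hfinvinj j i hEji heach
      linarith
    -- propagate along a path to a terminal
    obtain ⟨t0, ht0⟩ := hT
    have hpath : ∀ v, Relation.ReflTransGen E i0 v → π v - π' v = δ := by
      intro v hv
      induction hv with
      | refl => rfl
      | tail hab hbc ih => exact hS _ ih _ (hsymm _ _ hbc)
    have := hpath t0 (hconn i0 t0)
    rw [hπβ t0 ht0, hπ'β t0 ht0] at this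
    simp at this
    linarith
  have hle : ∀ i, π i ≤ π' i := by
    intro i
    have := hmax' i
    linarith
  have hmain : ∀ t ∈ T,
      (- ∑ j ∈ univ.filter (fun j => E j t), finv j t (π j - π t)) ≥
      (- ∑ j ∈ univ.filter (fun j => E j t), finv j t (π' j - π' t)) := by
    intro t ht
    have : (∑ j ∈ univ.filter (fun j => E j t), finv j t (π j - π t)) ≤
        ∑ j ∈ univ.filter (fun j => E j t), finv j t (π' j - π' t) := by
      apply Finset.sum_le_sum
      intro j hj
      have hE' : E j t := (mem_filter.mp hj).2
      apply hfinvmono j t hE'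
      have h1 := hle j
      rw [hπβ t ht, hπ'β t ht] at *
      linarith
    linarith
  refine ⟨hmain, fun h hh => ?_⟩
  apply Finset.sum_le_sum
  intro t ht
  exact hh t ht (hmain t ht)
end
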